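/- arXiv:2008.04416 — 3 statements merged into one kernel-verified Lean document; each statement's English description precedes it below -/
import Mathlib

section
/- Let G be a graph, S a subset of vertices, and let m_S denote the number of edges of G with both endpoints in S. Let T be the set of vertices v in S such that v is minimal (with respect to a fixed linear order on the vertices) in its closed neighbourhood within the induced subgraph G[S]. Then T is an independent set in G and |T| ≥ |S| − m_S. -/
/-!
Two local minima of `G[S]` cannot be adjacent, since each would be smaller than the other.
Every other vertex `v` of `S` has a smaller neighbour `u` in `S`, so `v` is the larger endpoint
of the edge `uv` of `G[S]`; hence `S \ T` lies in the image of the edges of `G[S]` under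
`Sym2.sup`, and `|S| - |T| ≤ m_S`.
-/

open Finset

namespace SimpleGraph

variable {V : Type*} [LinearOrder V] (G : SimpleGraph V) [DecidableRel G.Adj]

def localMinima (S : Finset V) : Finset V :=
  S.filter (fun v => ∀ u ∈ S, G.Adj v u → v < u)

theorem localMinima_subset (S : Finset V) : G.localMinima S ⊆ S :=
  filter_subset _ _

theorem not_adj_of_mem_localMinima {S : Finset V} {u v : V}
    (hu : u ∈ G.localMinima S) (hv : v ∈ G.localMinima S) : ¬ G.Adj u v := by
  intro huv
  rw [localMinima, mem_filter] at hu hv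
  exact lt_asymm (hu.2 v hv.1 huv) (hv.2 u hu.1 huv.symm)

theorem exists_adj_lt_of_mem_sdiff_localMinima {S : Finset V} {v : V}
    (hv : v ∈ S \ G.localMinima S) : ∃ u ∈ S, G.Adj v u ∧ u < v := by
  simp only [localMinima, mem_sdiff, mem_filter, not_and, not_forall, not_lt] at hv
  obtain ⟨u, huS, hvu, hle⟩ := hv.2 hv.1
  exact ⟨u, huS, hvu, hle.lt_of_ne (G.ne_of_adj hvu).symm⟩

theorem card_sdiff_localMinima_le [Fintype V] (S : Finset V) :
    #(S \ G.localMinima S) ≤ #{e ∈ G.edgeFinset | ∀ x ∈ e, x ∈ S} := by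
  refine (card_le_card ?_).trans (card_image_le (f := Sym2.sup))
  intro v hv
  obtain ⟨u, huS, hvu, hlt⟩ := G.exists_adj_lt_of_mem_sdiff_localMinima hv
  have hvS : v ∈ S := (mem_sdiff.1 hv).1
  refine mem_image.2 ⟨s(v, u), ?_, by simp [hlt.le]⟩
  simp only [mem_filter, mem_edgeFinset, mem_edgeSet, Sym2.mem_iff, forall_eq_or_imp, forall_eq]
  exact ⟨hvu, hvS, huS⟩

end SimpleGraph

/-- Let `S` be a set of vertices of a graph `G` whose vertices carry a linear order, and
let `m_S` be the number of edges of `G` with both endpoints in `S`.  The set `T` of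
vertices of `S` that are smaller than all their neighbours within `G[S]` is an
independent set of `G` with `|T| ≥ |S| - m_S`. -/
theorem stmt_4 {V : Type} [Fintype V] [LinearOrder V]
    (G : SimpleGraph V) [DecidableRel G.Adj] (S : Finset V) :
    let mS := (G.edgeFinset.filter (fun e => ∀ x ∈ e, x ∈ S)).card
    let T := S.filter (fun v => ∀ u ∈ S, G.Adj v u → v < u)
    (∀ u ∈ T, ∀ v ∈ T, u ≠ v → ¬ G.Adj u v) ∧ S.card - mS ≤ T.card := by
  intro mS T
  -- With `Fintype V` in scope, `T` is elaborated with a different decidability instance.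
  have hT : T = G.localMinima S := by ext; simp [T, SimpleGraph.localMinima]
  rw [hT]
  refine ⟨fun u hu v hv _ => G.not_adj_of_mem_localMinima hu hv, ?_⟩
  have hsdiff := card_sdiff_of_subset (G.localMinima_subset S)
  have hm := G.card_sdiff_localMinima_le S
  omega
end

section
/- Every graph on n vertices with minimum degree d has a dominating set of size at most n(ln(d+1)+1)/(d+1). -/
open Finset

private lemma log_ge_one_sub_inv {t : ℝ} (ht : 1 ≤ t) : 1 - 1/t ≤ Real.log t := by
  have h0 : (0:ℝ) < t := by linarith
  have h1 := Real.log_le_sub_one_of_pos (x := 1/t) (by positivity)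
  rw [one_div, Real.log_inv] at h1
  rw [one_div]
  linarith

private lemma h_mono {x y : ℝ} (hx : 0 ≤ x) (hxy : x ≤ y) :
    Real.log (max x 1) + min x 1 ≤ Real.log (max y 1) + min y 1 := by
  have := Real.log_le_log (x := max x 1) (y := max y 1)
    (lt_of_lt_of_le one_pos (le_max_right x 1)) (max_le_max hxy le_rfl)
  have := min_le_min hxy (le_refl (1:ℝ))
  linarith

private lemma key_ineq {t a : ℝ} (ht : 1 ≤ t) (ha0 : 0 < a) (ha1 : a ≤ 1) :
    a + (Real.log (max (t*(1-a)) 1) + min (t*(1-a)) 1)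
      ≤ Real.log (max t 1) + min t 1 := by
  have ht0 : (0:ℝ) < t := by linarith
  rw [max_eq_left ht, min_eq_right ht]
  rcases le_or_gt (t*(1-a)) 1 with h | h
  · rw [max_eq_right h, min_eq_left h, Real.log_one]
    have hlog := log_ge_one_sub_inv ht
    have h2 : (1 - t*(1-a)) * (t - 1) ≥ 0 := by
      apply mul_nonneg <;> linarith
    have hinv : t * (1/t) = 1 := mul_one_div_cancel (ne_of_gt ht0)
    have h1 : a + t*(1-a) ≤ 2 - 1/t := by nlinarith [h2, hinv, sq_nonneg (t-1)]
    linarith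
  · rw [max_eq_left h.le, min_eq_right h.le]
    have h1a : 0 < 1 - a := by nlinarith
    rw [Real.log_mul (ne_of_gt ht0) (ne_of_gt h1a)]
    have := Real.log_le_sub_one_of_pos h1a
    linarith

private lemma greedy {V : Type} [Fintype V] [DecidableEq V]
    (G : SimpleGraph V) [DecidableRel G.Adj] (d : ℕ)
    (hmin : ∀ v : V, d ≤ G.degree v) (U : Finset V) (hU : U.Nonempty) :
    ∃ v : V, U.card * (d+1) ≤
      (Fintype.card V) * (U.filter (fun u => u = v ∨ G.Adj v u)).card := by
  have hne : (univ : Finset V).Nonempty := ⟨hU.choose, mem_univ _⟩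
  have hsum : U.card * (d+1) ≤ ∑ v : V, (U.filter (fun u => u = v ∨ G.Adj v u)).card := by
    have hswap : ∑ v : V, (U.filter (fun u => u = v ∨ G.Adj v u)).card
        = ∑ u ∈ U, (univ.filter (fun v : V => u = v ∨ G.Adj v u)).card := by
      simp only [card_filter]
      exact Finset.sum_comm
    rw [hswap]
    have hbound : ∀ u ∈ U, d + 1 ≤ (univ.filter (fun v : V => u = v ∨ G.Adj v u)).card := by
      intro u _
      have heq : (univ.filter (fun v : V => u = v ∨ G.Adj v u))
          = insert u (G.neighborFinset u) := by
        ext w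
        simp [SimpleGraph.mem_neighborFinset, eq_comm, SimpleGraph.adj_comm]
      rw [heq, card_insert_of_notMem (by simp)]
      have := hmin u
      rw [SimpleGraph.card_neighborFinset_eq_degree]
      omega
    calc U.card * (d+1) = ∑ _u ∈ U, (d+1) := by rw [Finset.sum_const, smul_eq_mul]
      _ ≤ _ := Finset.sum_le_sum hbound
  have := Finset.exists_le_of_sum_le (f := fun _ : V => U.card * (d+1))
    (g := fun v : V => (Fintype.card V) * (U.filter (fun u => u = v ∨ G.Adj v u)).card)
    hne ?_
  · obtain ⟨v, _, hv⟩ := this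
    exact ⟨v, hv⟩
  · rw [Finset.sum_const, smul_eq_mul, ← Finset.mul_sum, card_univ]
    exact Nat.mul_le_mul_left _ hsum

private lemma cover {V : Type} [Fintype V] [DecidableEq V]
    (G : SimpleGraph V) [DecidableRel G.Adj] (d : ℕ)
    (hmin : ∀ v : V, d ≤ G.degree v) (U : Finset V) :
    ∃ s : Finset V, (∀ u ∈ U, u ∈ s ∨ ∃ w ∈ s, G.Adj w u) ∧
      (s.card : ℝ) ≤ ((Fintype.card V : ℝ) / ((d:ℝ)+1)) *
        (Real.log (max ((U.card : ℝ) * ((d:ℝ)+1) / (Fintype.card V : ℝ)) 1)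
          + min ((U.card : ℝ) * ((d:ℝ)+1) / (Fintype.card V : ℝ)) 1) := by
  induction U using Finset.strongInduction with
  | _ U ih =>
  set N : ℝ := (Fintype.card V : ℝ) with hNdef
  set D : ℝ := (d:ℝ)+1 with hDdef
  have hD : (0:ℝ) < D := by positivity
  rcases U.eq_empty_or_nonempty with rfl | hU
  · refine ⟨∅, by simp, ?_⟩
    norm_num
  have hNpos : (0:ℝ) < N := by
    have h : 0 < Fintype.card V := Fintype.card_pos_iff.mpr ⟨hU.choose⟩
    rw [hNdef]
    exact_mod_cast h
  have hDN : D ≤ N := by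
    have h1 : d < Fintype.card V :=
      lt_of_le_of_lt (hmin hU.choose) (G.degree_lt_card_verts hU.choose)
    have : (d:ℝ) + 1 ≤ (Fintype.card V : ℝ) := by exact_mod_cast h1
    exact this
  rcases le_or_gt ((U.card:ℝ) * D) N with hA | hB
  · -- small case: take s = U
    refine ⟨U, fun u hu => Or.inl hu, ?_⟩
    have ht1 : (U.card:ℝ) * D / N ≤ 1 := (div_le_one hNpos).mpr hA
    have ht0 : (0:ℝ) ≤ (U.card:ℝ) * D / N := by positivity
    rw [max_eq_right ht1, min_eq_left ht1, Real.log_one, zero_add]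
    have : N / D * ((U.card:ℝ) * D / N) = (U.card:ℝ) := by
      field_simp
    linarith [this.ge]
  · -- greedy step
    obtain ⟨v, hv⟩ := greedy G d hmin U hU
    set C := U.filter (fun u => u = v ∨ G.Adj v u) with hCdef
    have hCsub : C ⊆ U := filter_subset _ _
    have hCpos : 0 < C.card := by
      rcases Nat.eq_zero_or_pos C.card with h0 | h
      · exfalso
        rw [h0, Nat.mul_zero] at hv
        have h1 : U.card * (d+1) = 0 := Nat.le_zero.mp hv
        have h2 := Finset.card_pos.mpr hU
        rcases Nat.mul_eq_zero.mp h1 with h | h <;> omega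
      · exact h
    have hss : U \ C ⊂ U := Finset.sdiff_ssubset hCsub (card_pos.mp hCpos)
    obtain ⟨s', hs'dom, hs'card⟩ := ih (U \ C) hss
    refine ⟨insert v s', ?_, ?_⟩
    · intro u hu
      by_cases huC : u ∈ C
      · rw [hCdef, mem_filter] at huC
        rcases huC.2 with rfl | hadj
        · exact Or.inl (mem_insert_self _ _)
        · exact Or.inr ⟨v, mem_insert_self _ _, hadj⟩
      · rcases hs'dom u (mem_sdiff.mpr ⟨hu, huC⟩) with h | ⟨w, hw, hadj⟩
        · exact Or.inl (mem_insert_of_mem h)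
        · exact Or.inr ⟨w, mem_insert_of_mem hw, hadj⟩
    · -- cardinality bound
      have hcard' : ((U \ C).card : ℝ) = (U.card:ℝ) - (C.card:ℝ) := by
        rw [card_sdiff_of_subset hCsub]
        have := Finset.card_le_card hCsub
        push_cast [Nat.cast_sub this]
        ring
      have hvR : (U.card:ℝ) * D ≤ N * (C.card:ℝ) := by
        have : ((U.card * (d+1) : ℕ) : ℝ) ≤ ((Fintype.card V * C.card : ℕ) : ℝ) :=
          Nat.cast_le.mpr hv
        push_cast at this
        rw [hNdef, hDdef]
        push_cast
        linarith
      set a : ℝ := D / N with hadef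
      set t : ℝ := (U.card:ℝ) * D / N with htdef
      have ha0 : 0 < a := div_pos hD hNpos
      have ha1 : a ≤ 1 := (div_le_one hNpos).mpr hDN
      have ht : 1 ≤ t := le_of_lt ((one_lt_div hNpos).mpr hB)
      have hkey := key_ineq ht ha0 ha1
      have hmle : ((U \ C).card : ℝ) * D / N ≤ t * (1 - a) := by
        rw [hcard', htdef, hadef]
        have hc : (U.card:ℝ) * D / N ≤ (C.card:ℝ) := by
          rw [div_le_iff₀ hNpos]
          linarith
        have hDN0 : 0 ≤ D / N := le_of_lt ha0
        calc ((U.card:ℝ) - (C.card:ℝ)) * D / N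
            = ((U.card:ℝ) - (C.card:ℝ)) * (D / N) := by ring
          _ ≤ ((U.card:ℝ) - (U.card:ℝ) * D / N) * (D / N) := by
              apply mul_le_mul_of_nonneg_right _ hDN0
              linarith
          _ = (U.card:ℝ) * D / N * (1 - D / N) := by field_simp
      have hmono : Real.log (max (((U \ C).card : ℝ) * D / N) 1) + min (((U \ C).card : ℝ) * D / N) 1
          ≤ Real.log (max (t * (1-a)) 1) + min (t * (1-a)) 1 :=
        h_mono (by positivity) hmle
      have hND : (0:ℝ) ≤ N / D := by positivity
      have hNDa : N / D * a = 1 := by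
        rw [hadef]; field_simp
      have hcardins : ((insert v s').card : ℝ) ≤ (s'.card : ℝ) + 1 := by
        have := Finset.card_insert_le v s'
        exact_mod_cast this
      have h3 : N / D * (Real.log (max (((U \ C).card : ℝ) * D / N) 1) + min (((U \ C).card : ℝ) * D / N) 1)
          ≤ N / D * (Real.log (max (t * (1-a)) 1) + min (t * (1-a)) 1) :=
        mul_le_mul_of_nonneg_left hmono hND
      have h4 : N / D * (a + (Real.log (max (t * (1-a)) 1) + min (t * (1-a)) 1))
          ≤ N / D * (Real.log (max t 1) + min t 1) :=
        mul_le_mul_of_nonneg_left hkey hND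
      rw [mul_add, hNDa] at h4
      calc ((insert v s').card : ℝ) ≤ (s'.card : ℝ) + 1 := hcardins
        _ ≤ N / D * (Real.log (max (((U \ C).card : ℝ) * D / N) 1)
              + min (((U \ C).card : ℝ) * D / N) 1) + 1 := by linarith
        _ ≤ N / D * (Real.log (max t 1) + min t 1) := by linarith

/-- Every graph on `n` vertices with minimum degree `d` has a dominating set of size
at most `n * (ln (d + 1) + 1) / (d + 1)`. -/
theorem stmt_6 {V : Type} [Fintype V] [DecidableEq V]
    (G : SimpleGraph V) [DecidableRel G.Adj] (d : ℕ)
    (hmin : ∀ v : V, d ≤ G.degree v) :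
    ∃ s : Finset V, (∀ v : V, v ∉ s → ∃ u ∈ s, G.Adj u v) ∧
      (s.card : ℝ) ≤ (Fintype.card V : ℝ) * (Real.log (d + 1) + 1) / (d + 1) := by
  obtain ⟨s, hdom, hcard⟩ := cover G d hmin Finset.univ
  refine ⟨s, ?_, ?_⟩
  · intro v hv
    rcases hdom v (mem_univ v) with h | h
    · exact absurd h hv
    · exact h
  · rcases Nat.eq_zero_or_pos (Fintype.card V) with h0 | hpos
    · have hs : s.card = 0 := by
        have := Finset.card_le_univ s
        omega
      rw [h0, hs]
      push_cast
      rw [zero_mul, zero_div]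
    · have hN : (0:ℝ) < (Fintype.card V : ℝ) := by exact_mod_cast hpos
      have hD : (0:ℝ) < (d:ℝ) + 1 := by positivity
      rw [card_univ] at hcard
      have ht : ((Fintype.card V : ℝ)) * ((d:ℝ)+1) / (Fintype.card V : ℝ) = (d:ℝ)+1 := by
        field_simp
      rw [ht] at hcard
      have hD1 : (1:ℝ) ≤ (d:ℝ) + 1 := by
        have := Nat.cast_nonneg (α := ℝ) d
        linarith
      rw [max_eq_left hD1, min_eq_right hD1] at hcard
      calc (s.card : ℝ) ≤ (Fintype.card V : ℝ) / ((d:ℝ)+1) * (Real.log ((d:ℝ)+1) + 1) := hcard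
        _ = (Fintype.card V : ℝ) * (Real.log ((d:ℝ)+1) + 1) / ((d:ℝ)+1) := by ring
end

section
/- Let G be a C4-free graph (containing no cycle on 4 vertices as a subgraph) and suppose G has a dominating set of size at most k. Then every vertex of degree at least 2k+1 belongs to every dominating set of size at most k. -/
/-- In a `C₄`-free graph having a dominating set of size at most `k`, every vertex of
degree at least `2k + 1` belongs to every dominating set of size at most `k`. -/
theorem stmt_8 {V : Type} [Fintype V] [DecidableEq V]
    (G : SimpleGraph V) [DecidableRel G.Adj] (k : ℕ)
    (hC4 : ∀ a b c d : V, a ≠ c → b ≠ d →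
      ¬ (G.Adj a b ∧ G.Adj b c ∧ G.Adj c d ∧ G.Adj d a))
    (hex : ∃ D : Finset V, (∀ v : V, v ∈ D ∨ ∃ u ∈ D, G.Adj u v) ∧ D.card ≤ k)
    (v : V) (hv : 2 * k + 1 ≤ G.degree v)
    (D : Finset V) (hD : ∀ w : V, w ∈ D ∨ ∃ u ∈ D, G.Adj u w) (hDk : D.card ≤ k) :
    v ∈ D := by
  classical
  by_contra hvD
  set N := G.neighborFinset v with hN
  have hcard : 2 * k + 1 ≤ N.card := by
    rwa [hN, SimpleGraph.card_neighborFinset_eq_degree]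
  let f : V → V := fun w => if h : w ∈ D then w else Classical.choose ((hD w).resolve_left h)
  have hfD : ∀ w, f w ∈ D := by
    intro w
    by_cases h : w ∈ D
    · simp [f, h]
    · simp only [f, dif_neg h]
      obtain ⟨hu, -⟩ := Classical.choose_spec ((hD w).resolve_left h)
      exact hu
  have hfadj : ∀ w, w ∉ D → G.Adj (f w) w := by
    intro w h
    simp only [f, dif_neg h]
    exact (Classical.choose_spec ((hD w).resolve_left h)).2
  have hfid : ∀ w, w ∈ D → f w = w := fun w h => by simp [f, h]
  have key : N.card ≤ 2 * (N.image f).card := by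
    apply Finset.card_le_mul_card_image
    intro u hu
    obtain ⟨w0, hw0, hfw0⟩ := Finset.mem_image.mp hu
    have huD : u ∈ D := hfw0 ▸ hfD w0
    have huv : u ≠ v := fun h => hvD (h ▸ huD)
    set S : Finset V := N.filter (fun w => w ∉ D ∧ f w = u) with hS
    have hS1 : S.card ≤ 1 := by
      apply Finset.card_le_one.mpr
      intro a ha b hb
      simp only [hS, hN, Finset.mem_filter, SimpleGraph.mem_neighborFinset] at ha hb
      by_contra hab
      exact hC4 v a u b huv.symm hab
        ⟨ha.1, by simpa using (ha.2.2 ▸ hfadj a ha.2.1).symm,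
          (hb.2.2 ▸ hfadj b hb.2.1), hb.1.symm⟩
    have hsub : N.filter (fun w => f w = u) ⊆ insert u S := by
      intro w hw
      simp only [Finset.mem_filter] at hw
      by_cases h : w ∈ D
      · have : w = u := by rw [← hw.2, hfid w h]
        simp [this]
      · exact Finset.mem_insert_of_mem (by simp [hS, Finset.mem_filter, hw.1, h, hw.2])
    calc (N.filter (fun w => f w = u)).card ≤ (insert u S).card := Finset.card_le_card hsub
      _ ≤ S.card + 1 := Finset.card_insert_le _ _
      _ ≤ 2 := by omega
  have himg : (N.image f).card ≤ k := by
    refine le_trans (Finset.card_le_card ?_) hDk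
    intro x hx
    obtain ⟨w, -, rfl⟩ := Finset.mem_image.mp hx
    exact hfD w
  omega
end
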